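/- Fix integers n ≥ 2 and k ≥ 3, a constant b_k < 0, and δ ∈ (0, 1/2); set c_k := 2(n−1)k²(−b_k)^{2/k}, γ_k := 1/2 − 1/k, μ_k := k/2 − 1. Let ζ̃ : (1,∞) → ℝ be a solution of (1/2)(u − u^{−1}) ζ̃′(u) − (4γ_k + u^{−2}) ζ̃(u) = (u−1)^{4γ_k} u^{4γ_k−2} satisfying ζ̃(u) = (1 + o(1))(u−1)^{4γ_k} as u ↘ 1 and ζ̃(u) = (1 + o(1)) u^{8γ_k} as u → ∞, and let A₇ > 0 and B₆ > 0 be constants. Then there exists B₇ ≥ B₆, depending only on n, k, b_k, δ, A₇, B₆ and ζ̃, such that the functions z̃_±(u,τ) := (1 ± δ) c_k e^{−2γ_k τ}(u² − 1)^{1+2γ_k} u^{−2} ± A₇ e^{−4γ_k τ} ζ̃(u) satisfy z̃₋(u,τ) < z̃₊(u,τ) at every point of the region 1 + B₆ e^{−μ_k τ} ≤ u ≤ B₇^{−1} e^{τ/2}. -/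
import Mathlib


open Topology Filter Asymptotics Set

/-- `γ_k = 1/2 - 1/k`. -/
noncomputable def gam (k : ℕ) : ℝ := 1/2 - 1/(k:ℝ)

/-- `μ_k = k/2 - 1`. -/
noncomputable def mu (k : ℕ) : ℝ := (k:ℝ)/2 - 1

/-- `c_k = 2(n-1)k²(-b_k)^{2/k}`. -/
noncomputable def ck (n k : ℕ) (bk : ℝ) : ℝ :=
  2 * ((n:ℝ) - 1) * (k:ℝ)^2 * (-bk) ^ ((2:ℝ)/(k:ℝ))

/-- The outer-region barrier with sign `s` (`s = 1` upper, `s = -1` lower):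
`z̃_± = (1 ± δ) c_k e^{-2γ_k τ}(u²-1)^{1+2γ_k} u⁻² ± A₇ e^{-4γ_k τ} ζ̃(u)`. -/
noncomputable def zOutPM (n k : ℕ) (bk δ A₇ : ℝ) (ζt : ℝ → ℝ) (s u τ : ℝ) : ℝ :=
  (1 + s*δ) * ck n k bk * Real.exp (-2 * gam k * τ) * (u^2 - 1) ^ (1 + 2 * gam k) * u ^ (-2:ℝ)
    + s * A₇ * Real.exp (-4 * gam k * τ) * ζt u

/-- the outer-region barriers are properly ordered. -/
theorem stmt10 (n k : ℕ) (hn : 2 ≤ n) (hk : 3 ≤ k) (bk : ℝ) (hbk : bk < 0)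
    (δ : ℝ) (hδ : δ ∈ Set.Ioo (0:ℝ) (1/2)) (ζt ζt' : ℝ → ℝ)
    (hderiv : ∀ u : ℝ, 1 < u → HasDerivAt ζt (ζt' u) u)
    (hode : ∀ u : ℝ, 1 < u →
      (1/2) * (u - u⁻¹) * ζt' u - (4 * gam k + u ^ (-2:ℝ)) * ζt u
        = (u - 1) ^ (4 * gam k) * u ^ (4 * gam k - 2))
    (hz1 : (fun u => ζt u - (u - 1) ^ (4 * gam k)) =o[𝓝[>] (1:ℝ)]
        fun u => (u - 1) ^ (4 * gam k))
    (hztop : (fun u => ζt u - u ^ (8 * gam k)) =o[atTop] fun u => u ^ (8 * gam k))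
    (A₇ B₆ : ℝ) (hA₇ : 0 < A₇) (hB₆ : 0 < B₆) :
    ∃ B₇ : ℝ, B₆ ≤ B₇ ∧
      ∀ u τ : ℝ,
        1 + B₆ * Real.exp (-mu k * τ) ≤ u → u ≤ B₇⁻¹ * Real.exp (τ/2) →
        zOutPM n k bk δ A₇ ζt (-1) u τ < zOutPM n k bk δ A₇ ζt 1 u τ := by
  -- positivity of ζt near 1
  have hev : ∀ᶠ x in 𝓝[>] (1:ℝ),
      ‖ζt x - (x - 1) ^ (4 * gam k)‖ ≤ (1/2 : ℝ) * ‖(x - 1) ^ (4 * gam k)‖ :=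
    hz1.def (by norm_num)
  obtain ⟨ε, hε, hsub⟩ := mem_nhdsGT_iff_exists_Ioo_subset.mp hev
  have hposnear : ∀ x ∈ Ioo (1:ℝ) ε, 0 < ζt x := by
    intro x hx
    have hw : 0 < (x - 1) ^ (4 * gam k) :=
      Real.rpow_pos_of_pos (by linarith [hx.1]) _
    have h := hsub hx
    simp only [Set.mem_setOf_eq, Real.norm_eq_abs] at h
    rw [abs_of_pos hw] at h
    have := abs_le.mp h
    linarith [this.1]
  -- ζt positive on all of (1,∞)
  have hzpos : ∀ x : ℝ, 1 < x → 0 < ζt x := by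
    by_contra hcon
    push_neg at hcon
    obtain ⟨u₀, hu₀, hle⟩ := hcon
    set S := {x : ℝ | 1 < x ∧ ζt x ≤ 0} with hS
    have hSne : S.Nonempty := ⟨u₀, hu₀, hle⟩
    have hSbdd : BddBelow S := ⟨1, fun x hx => le_of_lt hx.1⟩
    set a := sInf S with ha
    have hεle : ∀ x ∈ S, ε ≤ x := by
      intro x hx
      by_contra h
      push_neg at h
      exact absurd hx.2 (not_le.mpr (hposnear x ⟨hx.1, h⟩))
    have ha1 : 1 < a := lt_of_lt_of_le hε (le_csInf hSne hεle)
    have hnotS : ∀ x, 1 < x → x < a → 0 < ζt x := by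
      intro x hx hxa
      by_contra h
      push_neg at h
      exact absurd (csInf_le hSbdd ⟨hx, h⟩) (not_le.mpr hxa)
    have hca : ContinuousAt ζt a := (hderiv a ha1).continuousAt
    have haS : ζt a ≤ 0 := by
      by_contra h
      push_neg at h
      have hev2 : ∀ᶠ x in 𝓝 a, 0 < ζt x := hca (Ioi_mem_nhds h)
      obtain ⟨r, hr, hball⟩ := Metric.eventually_nhds_iff.mp hev2
      obtain ⟨x, hxS, hxlt⟩ := (csInf_lt_iff hSbdd hSne).mp (by linarith : sInf S < a + r)
      have hax : a ≤ x := csInf_le hSbdd hxS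
      have : dist x a < r := by
        rw [Real.dist_eq, abs_of_nonneg (by linarith)]
        linarith
      exact absurd hxS.2 (not_le.mpr (hball this))
    have haS' : 0 ≤ ζt a := by
      have htend : Tendsto ζt (𝓝[<] a) (𝓝 (ζt a)) := hca.continuousWithinAt
      refine ge_of_tendsto htend ?_
      filter_upwards [Ioo_mem_nhdsLT_of_mem (⟨ha1, le_refl a⟩ : a ∈ Ioc 1 a)] with x hx
      exact le_of_lt (hnotS x hx.1 hx.2)
    have hza : ζt a = 0 := le_antisymm haS haS'
    have hAinv : a⁻¹ < 1 := inv_lt_one_of_one_lt₀ ha1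
    have hode_a := hode a ha1
    rw [hza, mul_zero, sub_zero] at hode_a
    have hrhs : 0 < (a - 1) ^ (4 * gam k) * a ^ (4 * gam k - 2) :=
      mul_pos (Real.rpow_pos_of_pos (by linarith) _) (Real.rpow_pos_of_pos (by linarith) _)
    have hζ' : 0 < ζt' a := by nlinarith [hode_a, hrhs]
    have hslope := hasDerivAt_iff_tendsto_slope.mp (hderiv a ha1)
    have hev3 : ∀ᶠ x in 𝓝[≠] a, 0 < slope ζt a x := hslope (Ioi_mem_nhds hζ')
    have hev4 : ∀ᶠ x in 𝓝[<] a, 0 < slope ζt a x :=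
      hev3.filter_mono (nhdsWithin_mono a (fun x hx => ne_of_lt hx))
    have hmem : Ioo 1 a ∈ 𝓝[<] a := Ioo_mem_nhdsLT_of_mem ⟨ha1, le_refl a⟩
    obtain ⟨x, hxslope, hxIoo⟩ := (hev4.and (eventually_of_mem hmem (fun x hx => hx))).exists
    rw [slope_def_field, hza, sub_zero] at hxslope
    have hxa : x - a < 0 := by linarith [hxIoo.2]
    have hxneg : ζt x < 0 := by
      rcases div_pos_iff.mp hxslope with ⟨h1, h2⟩ | ⟨h1, h2⟩
      · linarith
      · exact h1
    exact absurd hxneg (not_lt.mpr (le_of_lt (hnotS x hxIoo.1 hxIoo.2)))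
  -- main conclusion with B₇ = B₆
  refine ⟨B₆, le_refl _, ?_⟩
  intro u τ hul _
  have hexp1 : 0 < B₆ * Real.exp (-mu k * τ) := mul_pos hB₆ (Real.exp_pos _)
  have hu1 : 1 < u := by linarith
  have hζu := hzpos u hu1
  have hn1 : (0:ℝ) < (n:ℝ) - 1 := by
    have : (2:ℝ) ≤ (n:ℝ) := by exact_mod_cast hn
    linarith
  have hk0 : (0:ℝ) < (k:ℝ) := by
    have : (3:ℝ) ≤ (k:ℝ) := by exact_mod_cast hk
    linarith
  have hck : 0 < ck n k bk := by
    unfold ck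
    exact mul_pos (mul_pos (mul_pos two_pos hn1) (by positivity))
      (Real.rpow_pos_of_pos (by linarith) _)
  have hP : 0 < (u^2 - 1) ^ (1 + 2 * gam k) :=
    Real.rpow_pos_of_pos (by nlinarith) _
  have hU : 0 < u ^ (-2:ℝ) := Real.rpow_pos_of_pos (by linarith) _
  have hT1 : 0 < ck n k bk * Real.exp (-2 * gam k * τ) * (u^2 - 1) ^ (1 + 2 * gam k)
      * u ^ (-2:ℝ) := mul_pos (mul_pos (mul_pos hck (Real.exp_pos _)) hP) hU
  have hT2 : 0 < A₇ * Real.exp (-4 * gam k * τ) * ζt u :=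
    mul_pos (mul_pos hA₇ (Real.exp_pos _)) hζu
  have hδ0 := hδ.1
  unfold zOutPM
  nlinarith [mul_pos hδ0 hT1, hT2]
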